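/- arXiv:2101.00914 — 4 statements merged into one kernel-verified Lean document; each statement's English description precedes it below -/
import Mathlib

section
/- Let Σ be a p×p real positive semidefinite matrix with rank(Σ) > k for an integer 0 ≤ k ≤ p−1 satisfying k < srank₄(Σ). Assume there is a set S ⊆ {1,…,p} with |S| ≥ k such that ‖Σ^{1/2}e_i‖₂² ≥ tr(Σ)/(4p) for every i ∈ S, where (e_i) is the standard basis of ℝ^p. Then srank₄(Σ^{1/2}) ≥ (16p²/(4p−k)²) · (1 − √(k/srank₄(Σ))) · R_k(Σ). -/
open Matrix Finset

open scoped ComplexOrder in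
/-- The positive semidefinite square root, as defined in the older Mathlib
(`Matrix.PosSemidef.sqrt`, since removed). -/
noncomputable def Matrix.PosSemidef.sqrt {n 𝕜 : Type*} [Fintype n] [DecidableEq n] [RCLike 𝕜]
    {A : Matrix n n 𝕜} (hA : A.PosSemidef) : Matrix n n 𝕜 :=
  hA.1.eigenvectorUnitary.1 * diagonal ((↑) ∘ (√·) ∘ hA.1.eigenvalues) *
  (star hA.1.eigenvectorUnitary : Matrix n n 𝕜)

/-!
Pick `S' ⊆ S` with `k` elements. The squared norm of the `i`-th column of `Σ^{1/2}` is `Σᵢᵢ`, so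
`k · tr Σ / (4p) ≤ ∑_{i ∈ S'} Σᵢᵢ`. Writing `Σ = U diag(λ) Uᵀ`, that sum is `∑ⱼ wⱼ λⱼ` with weights
`wⱼ = ∑_{i ∈ S'} Uᵢⱼ² ∈ [0, 1]` of total mass `k`, hence at most `λ₁ + ⋯ + λₖ`. So the top `k`
eigenvalues carry a fraction `k / (4p)` of the trace and the tail `∑_{i > k} λᵢ` is at most
`(1 - k / (4p)) tr Σ`. On the other side, Cauchy–Schwarz bounds `λ₁² + ⋯ + λₖ²` by
`√(k ∑ λᵢ⁴)`, so the tail of `∑ λᵢ²` is at least `(1 - √(k / srank₄ Σ)) ∑ λᵢ²`.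
-/

namespace Matrix.PosSemidef

open scoped ComplexOrder

variable {n 𝕜 : Type*} [Fintype n] [DecidableEq n] [RCLike 𝕜] {A : Matrix n n 𝕜}

lemma isHermitian_sqrt (hA : A.PosSemidef) : hA.sqrt.IsHermitian := by
  have hD : star (((↑) : ℝ → 𝕜) ∘ (√·) ∘ hA.1.eigenvalues) = (↑) ∘ (√·) ∘ hA.1.eigenvalues := by
    ext; simp
  simp [IsHermitian, sqrt, conjTranspose_mul, Matrix.mul_assoc, star_eq_conjTranspose, hD]

lemma sqrt_mul_self (hA : A.PosSemidef) : hA.sqrt * hA.sqrt = A := by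
  set V : Matrix n n 𝕜 := (hA.1.eigenvectorUnitary : Matrix n n 𝕜)
  set D : Matrix n n 𝕜 := diagonal ((↑) ∘ (√·) ∘ hA.1.eigenvalues)
  have hV : star V * V = 1 := hA.1.eigenvectorUnitary.2.1
  have hD : D * D = diagonal ((↑) ∘ hA.1.eigenvalues) := by
    simp [D, diagonal_mul_diagonal, ← RCLike.ofReal_mul,
      Real.mul_self_sqrt (hA.eigenvalues_nonneg _)]
  conv_rhs => rw [hA.1.spectral_theorem, Unitary.conjStarAlgAut_apply]
  calc hA.sqrt * hA.sqrt = V * (D * (star V * V) * D) * star V := by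
        simp only [sqrt, V, D, Matrix.mul_assoc]
    _ = _ := by rw [hV, Matrix.mul_one, hD]

end Matrix.PosSemidef

lemma Matrix.PosSemidef.sum_sq_sqrt_apply {n : Type*} [Fintype n] [DecidableEq n]
    {A : Matrix n n ℝ} (hA : A.PosSemidef) (i : n) : ∑ j, hA.sqrt j i ^ 2 = A i i := by
  conv_rhs => rw [← hA.sqrt_mul_self, mul_apply]
  refine sum_congr rfl fun j _ => ?_
  rw [sq, ← hA.isHermitian_sqrt.apply i j]
  simp

section OrthogonalConjugate

variable {n : Type*} [Fintype n] [DecidableEq n] {U : Matrix n n ℝ} {lam : n → ℝ}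

lemma Matrix.trace_mul_diagonal_mul_transpose (hU : Uᵀ * U = 1) :
    (U * diagonal lam * Uᵀ).trace = ∑ i, lam i := by
  rw [trace_mul_comm, ← Matrix.mul_assoc, hU, Matrix.one_mul, trace_diagonal]

lemma Matrix.mul_diagonal_mul_transpose_apply_self (i : n) :
    (U * diagonal lam * Uᵀ) i i = ∑ j, U i j ^ 2 * lam j := by
  rw [mul_apply]
  simp only [mul_diagonal, transpose_apply]
  exact sum_congr rfl fun j _ => by ring

lemma Matrix.PosSemidef.nonneg_of_eq_mul_diagonal_mul_transpose
    (hA : (U * diagonal lam * Uᵀ).PosSemidef) (hU : Uᵀ * U = 1) (i : n) : 0 ≤ lam i := by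
  have h := hA.conjTranspose_mul_mul_same U
  rw [conjTranspose_eq_transpose_of_trivial, ← Matrix.mul_assoc, ← Matrix.mul_assoc, hU,
    Matrix.one_mul, Matrix.mul_assoc, hU, Matrix.mul_one] at h
  exact posSemidef_diagonal_iff.mp h i

lemma Matrix.sum_sq_apply_of_mul_transpose_eq_one (hU : U * Uᵀ = 1) (i : n) :
    ∑ j, U i j ^ 2 = 1 := by
  simpa [mul_apply, sq] using congrFun (congrFun hU i) i

end OrthogonalConjugate

lemma Fin.sum_mul_le_sum_val_lt_of_antitone {p k : ℕ} (hkp : k < p) {lam w : Fin p → ℝ}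
    (hanti : Antitone lam) (hw0 : ∀ j, 0 ≤ w j) (hw1 : ∀ j, w j ≤ 1) (hw : ∑ j, w j = k) :
    ∑ j, w j * lam j ≤ ∑ j ∈ univ.filter (fun j : Fin p => (j : ℕ) < k), lam j := by
  set t := lam ⟨k, hkp⟩
  set e : Fin p → ℝ := fun j => if (j : ℕ) < k then 1 else 0
  -- The excess weight `w - e` is nonpositive exactly where `lam ≥ t`.
  have key : ∀ j, (w j - e j) * lam j ≤ (w j - e j) * t := by
    intro j
    by_cases hj : (j : ℕ) < k
    · exact mul_le_mul_of_nonpos_left (hanti (Fin.le_def.mpr hj.le)) (by simp [e, hj, hw1 j])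
    · exact mul_le_mul_of_nonneg_left (hanti (Fin.le_def.mpr (not_lt.mp hj)))
        (by simp [e, hj, hw0 j])
  have he : ∑ j, e j = k := by
    simp [e, Fin.card_filter_val_lt, hkp.le]
  have hhead : ∑ j ∈ univ.filter (fun j : Fin p => (j : ℕ) < k), lam j = ∑ j, e j * lam j := by
    simp [e, sum_filter]
  calc ∑ j, w j * lam j = ∑ j, e j * lam j + ∑ j, (w j - e j) * lam j := by
        rw [← sum_add_distrib]; exact sum_congr rfl fun j _ => by ring
    _ ≤ ∑ j, e j * lam j + ∑ j, (w j - e j) * t := add_le_add_right (sum_le_sum fun j _ => key j) _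
    _ = ∑ j ∈ univ.filter (fun j : Fin p => (j : ℕ) < k), lam j := by
        rw [← sum_mul, sum_sub_distrib, hw, he, sub_self, zero_mul, add_zero, hhead]

lemma sum_le_sqrt_card_mul_sum_sq {ι : Type*} [Fintype ι] (s : Finset ι) (f : ι → ℝ) :
    ∑ i ∈ s, f i ≤ √(#s * ∑ i, f i ^ 2) := by
  refine Real.le_sqrt_of_sq_le (sq_sum_le_card_mul_sum_sq.trans ?_)
  exact mul_le_mul_of_nonneg_left (sum_le_univ_sum_of_nonneg fun i => sq_nonneg (f i))
    (Nat.cast_nonneg _)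

lemma sq_sum_sq_div_sum_pow_four_le_card {ι : Type*} [Fintype ι] (f : ι → ℝ) :
    (∑ i, f i ^ 2) ^ 2 / ∑ i, f i ^ 4 ≤ Fintype.card ι := by
  refine div_le_of_le_mul₀ (sum_nonneg fun i _ => by positivity) (Nat.cast_nonneg _) ?_
  have h4 (i : ι) : f i ^ 4 = (f i ^ 2) ^ 2 := by ring
  simpa only [h4, card_univ] using sq_sum_le_card_mul_sum_sq (s := univ) (f := (f · ^ 2))

lemma one_sub_mul_div_le_div {Q q r a : ℝ} (ha : 0 ≤ a) (hQ : 0 < Q) (hr : r < 1)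
    (hq : Q * (1 - r) ≤ q) : (1 - r) * (a / q) ≤ a / Q := by
  have hq0 : 0 < q := (mul_pos hQ (sub_pos.mpr hr)).trans_le hq
  rw [← mul_div_assoc, div_le_div_iff₀ hq0 hQ]
  calc (1 - r) * a * Q = a * (Q * (1 - r)) := by ring
    _ ≤ a * q := mul_le_mul_of_nonneg_left hq ha

lemma stableRank_sqrt_lower_bound_of_head_sum {p k : ℕ} (hkp : k < p) {lam : Fin p → ℝ}
    (hlam : ∀ i, 0 ≤ lam i)
    (hksrank : (k : ℝ) < (∑ i, lam i ^ 2) ^ 2 / (∑ i, lam i ^ 4))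
    (hhead : k * ∑ i, lam i ≤ 4 * p * ∑ i ∈ univ.filter (fun i : Fin p => (i : ℕ) < k), lam i) :
    16 * (p : ℝ) ^ 2 / (4 * (p : ℝ) - k) ^ 2 *
        (1 - √((k : ℝ) / ((∑ i, lam i ^ 2) ^ 2 / (∑ i, lam i ^ 4)))) *
        ((∑ i ∈ univ.filter (fun i : Fin p => k ≤ (i : ℕ)), lam i) ^ 2 /
          (∑ i ∈ univ.filter (fun i : Fin p => k ≤ (i : ℕ)), lam i ^ 2))
      ≤ (∑ i, lam i) ^ 2 / (∑ i, lam i ^ 2) := by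
  set Q := ∑ i, lam i ^ 2
  set F := ∑ i, lam i ^ 4
  set r := √(k / (Q ^ 2 / F))
  set s := ∑ i ∈ univ.filter (fun i : Fin p => k ≤ (i : ℕ)), lam i
  set q := ∑ i ∈ univ.filter (fun i : Fin p => k ≤ (i : ℕ)), lam i ^ 2
  have hkp' : (k : ℝ) < p := by exact_mod_cast hkp
  have hsrank : 0 < Q ^ 2 / F := (Nat.cast_nonneg k).trans_lt hksrank
  have hF : 0 < F := by
    rcases div_pos_iff.mp hsrank with h | h
    · exact h.2
    · exact absurd h.2 (sum_nonneg fun i _ => by positivity).not_gt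
  have hQ : 0 < Q := by
    refine (sum_nonneg fun i _ => sq_nonneg (lam i)).lt_of_ne' fun h : Q = 0 => ?_
    simp [h] at hsrank
  have hr1 : r < 1 := by
    rw [← Real.sqrt_one]
    exact Real.sqrt_lt_sqrt (by positivity) ((div_lt_one hsrank).mpr hksrank)
  have hq : Q * (1 - r) ≤ q := by
    have hsplit := sum_filter_add_sum_filter_not univ (fun i : Fin p => (i : ℕ) < k) (lam · ^ 2)
    have hCS := sum_le_sqrt_card_mul_sum_sq (univ.filter (fun i : Fin p => (i : ℕ) < k)) (lam · ^ 2)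
    simp only [not_lt, ← pow_mul, Nat.reduceMul] at hsplit hCS
    rw [Fin.card_filter_val_lt, min_eq_right hkp.le] at hCS
    have hr : r = √(k * F) / Q := by
      simp only [r]
      rw [div_div_eq_mul_div, Real.sqrt_div' _ (sq_nonneg Q), Real.sqrt_sq hQ.le]
    rw [hr, mul_sub, mul_one, mul_div_cancel₀ _ hQ.ne']
    linarith
  have hs : 4 * p / (4 * p - k) * s ≤ ∑ i, lam i := by
    have hsplit := sum_filter_add_sum_filter_not univ (fun i : Fin p => (i : ℕ) < k) lam
    simp only [not_lt] at hsplit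
    rw [div_mul_eq_mul_div, div_le_iff₀ (by linarith)]
    linear_combination hhead + 4 * p * hsplit
  have hc : (0 : ℝ) ≤ 4 * p / (4 * p - k) := div_nonneg (by positivity) (by linarith)
  calc _ = (4 * p / (4 * p - k)) ^ 2 * ((1 - r) * (s ^ 2 / q)) := by rw [div_pow]; ring
    _ ≤ (4 * p / (4 * p - k)) ^ 2 * (s ^ 2 / Q) := by
        gcongr
        exact one_sub_mul_div_le_div (sq_nonneg s) hQ hr1 hq
    _ = (4 * p / (4 * p - k) * s) ^ 2 / Q := by ring
    _ ≤ (∑ i, lam i) ^ 2 / Q := by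
        gcongr
        exact mul_nonneg hc (sum_nonneg fun i _ => hlam i)

lemma Matrix.sum_mul_diagonal_mul_transpose_apply_self_le {p k : ℕ} (hkp : k < p)
    {U : Matrix (Fin p) (Fin p) ℝ} {lam : Fin p → ℝ} (hanti : Antitone lam) (hU : U * Uᵀ = 1)
    {S : Finset (Fin p)} (hS : #S = k) :
    ∑ i ∈ S, (U * diagonal lam * Uᵀ) i i ≤
      ∑ j ∈ univ.filter (fun j : Fin p => (j : ℕ) < k), lam j := by
  have hUU : Uᵀ * Uᵀᵀ = 1 := by rw [transpose_transpose]; exact mul_eq_one_comm.mp hU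
  set w : Fin p → ℝ := fun j => ∑ i ∈ S, U i j ^ 2
  have hw : ∑ i ∈ S, (U * diagonal lam * Uᵀ) i i = ∑ j, w j * lam j := by
    simp only [mul_diagonal_mul_transpose_apply_self, w, sum_mul]
    exact sum_comm
  rw [hw]
  refine Fin.sum_mul_le_sum_val_lt_of_antitone hkp hanti
    (fun j => sum_nonneg fun i _ => sq_nonneg _) (fun j => ?_) ?_
  · calc w j ≤ ∑ i, U i j ^ 2 := sum_le_univ_sum_of_nonneg fun i => sq_nonneg _
      _ = 1 := sum_sq_apply_of_mul_transpose_eq_one hUU j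
  · rw [sum_comm]
    simp [sum_sq_apply_of_mul_transpose_eq_one hU, hS]

theorem stmt0_general (p k : ℕ)
    (A : Matrix (Fin p) (Fin p) ℝ) (hA : A.PosSemidef)
    (lam : Fin p → ℝ) (hanti : Antitone lam)
    (U : Matrix (Fin p) (Fin p) ℝ) (hU : U * Uᵀ = 1)
    (hdiag : A = U * Matrix.diagonal lam * Uᵀ)
    (hksrank : (k : ℝ) < (∑ i, lam i ^ 2) ^ 2 / (∑ i, lam i ^ 4))
    (S : Finset (Fin p)) (hcard : k ≤ S.card)
    (hS : ∀ i ∈ S, A.trace / (4 * p) ≤ ∑ j, hA.sqrt j i ^ 2) :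
    16 * (p : ℝ) ^ 2 / (4 * (p : ℝ) - k) ^ 2 *
        (1 - Real.sqrt ((k : ℝ) / ((∑ i, lam i ^ 2) ^ 2 / (∑ i, lam i ^ 4)))) *
        ((∑ i ∈ Finset.univ.filter (fun i : Fin p => k ≤ (i : ℕ)), lam i) ^ 2 /
          (∑ i ∈ Finset.univ.filter (fun i : Fin p => k ≤ (i : ℕ)), lam i ^ 2))
      ≤ (∑ i, lam i) ^ 2 / (∑ i, lam i ^ 2) := by
  have hUU : Uᵀ * U = 1 := mul_eq_one_comm.mp hU
  have hkp : k < p := by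
    have := sq_sum_sq_div_sum_pow_four_le_card lam
    rw [Fintype.card_fin] at this
    exact_mod_cast hksrank.trans_le this
  have hlam := (hdiag ▸ hA).nonneg_of_eq_mul_diagonal_mul_transpose hUU
  obtain ⟨S', hS'S, hS'card⟩ := exists_subset_card_eq hcard
  have hcol : ∀ i ∈ S', (∑ j, lam j) / (4 * p) ≤ (U * diagonal lam * Uᵀ) i i := fun i hi => by
    have h := hS i (hS'S hi)
    rwa [hA.sum_sq_sqrt_apply, hdiag, trace_mul_diagonal_mul_transpose hUU] at h
  refine stableRank_sqrt_lower_bound_of_head_sum hkp hlam hksrank ?_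
  calc (k : ℝ) * ∑ j, lam j = 4 * p * ∑ _i ∈ S', (∑ j, lam j) / (4 * p) := by
        have hp : (p : ℝ) ≠ 0 := Nat.cast_ne_zero.mpr (by omega)
        rw [sum_const, hS'card, nsmul_eq_mul]
        field_simp
    _ ≤ 4 * p * ∑ i ∈ S', (U * diagonal lam * Uᵀ) i i := by gcongr with i hi; exact hcol i hi
    _ ≤ _ := by gcongr; exact sum_mul_diagonal_mul_transpose_apply_self_le hkp hanti hU hS'card

/-- lower bound on the stable rank of `Σ^{1/2}` in terms of the
effective rank `R_k(Σ)` and the stable rank of `Σ`.  Here `lam` lists the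
eigenvalues of the positive semidefinite matrix `A = Σ` in nonincreasing order
(witnessed by an orthogonal diagonalization), `A.rank > k`, `k < srank₄(Σ)`,
and at least `k` columns of `Σ^{1/2}` have squared Euclidean norm at least
`tr(Σ)/(4p)`. -/
theorem stmt0 (p k : ℕ) (hk : k ≤ p - 1)
    (A : Matrix (Fin p) (Fin p) ℝ) (hA : A.PosSemidef)
    (lam : Fin p → ℝ) (hanti : Antitone lam)
    (U : Matrix (Fin p) (Fin p) ℝ) (hU : U * Uᵀ = 1)
    (hdiag : A = U * Matrix.diagonal lam * Uᵀ)
    (hrank : k < A.rank)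
    (hksrank : (k : ℝ) < (∑ i, lam i ^ 2) ^ 2 / (∑ i, lam i ^ 4))
    (S : Finset (Fin p)) (hcard : k ≤ S.card)
    (hS : ∀ i ∈ S, A.trace / (4 * p) ≤ ∑ j, hA.sqrt j i ^ 2) :
    16 * (p : ℝ) ^ 2 / (4 * (p : ℝ) - k) ^ 2 *
        (1 - Real.sqrt ((k : ℝ) / ((∑ i, lam i ^ 2) ^ 2 / (∑ i, lam i ^ 4)))) *
        ((∑ i ∈ Finset.univ.filter (fun i : Fin p => k ≤ (i : ℕ)), lam i) ^ 2 /
          (∑ i ∈ Finset.univ.filter (fun i : Fin p => k ≤ (i : ℕ)), lam i ^ 2))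
      ≤ (∑ i, lam i) ^ 2 / (∑ i, lam i ^ 2) :=
  stmt0_general p k A hA lam hanti U hU hdiag hksrank S hcard hS
end

section
/- Let Σ be a p×p real positive semidefinite matrix and let 0 ≤ k ≤ p−1 be an integer with k < srank₄(Σ). Then Σ_{i=1}^p λ_i(Σ)² ≤ (1 − √(k/srank₄(Σ)))^{−1} · Σ_{i>k} λ_i(Σ)², i.e. the sum of the squares of the p−k smallest eigenvalues of Σ is at least (1 − √(k/srank₄(Σ))) times the sum of the squares of all eigenvalues. -/
open Matrix Finset

/-- for a positive semidefinite matrix with eigenvalues `lam` in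
nonincreasing order and `k < srank₄(Σ)`, the sum of squares of all eigenvalues
is at most `(1 − √(k/srank₄(Σ)))⁻¹` times the sum of the squares of the `p−k`
smallest eigenvalues. -/
theorem stmt2 (p k : ℕ) (hk : k ≤ p - 1)
    (A : Matrix (Fin p) (Fin p) ℝ) (hA : A.PosSemidef)
    (lam : Fin p → ℝ) (hanti : Antitone lam)
    (U : Matrix (Fin p) (Fin p) ℝ) (hU : U * Uᵀ = 1)
    (hdiag : A = U * Matrix.diagonal lam * Uᵀ)
    (hksrank : (k : ℝ) < (∑ i, lam i ^ 2) ^ 2 / (∑ i, lam i ^ 4)) :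
    (∑ i, lam i ^ 2)
      ≤ (1 - Real.sqrt ((k : ℝ) / ((∑ i, lam i ^ 2) ^ 2 / (∑ i, lam i ^ 4))))⁻¹ *
          (∑ i ∈ Finset.univ.filter (fun i : Fin p => k ≤ (i : ℕ)), lam i ^ 2) := by
  classical
  set S2 := ∑ i, lam i ^ 2 with hS2def
  set S4 := ∑ i, lam i ^ 4 with hS4def
  have hS2nn : 0 ≤ S2 := Finset.sum_nonneg fun i _ => sq_nonneg _
  have hS4nn : 0 ≤ S4 := Finset.sum_nonneg fun i _ => by positivity
  have hrpos : 0 < S2 ^ 2 / S4 := lt_of_le_of_lt (Nat.cast_nonneg k) hksrank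
  have hS4pos : 0 < S4 := by
    rcases hS4nn.lt_or_eq with h | h
    · exact h
    · rw [← h, div_zero] at hrpos; exact absurd hrpos (lt_irrefl 0)
  have hS2pos : 0 < S2 := by
    rcases hS2nn.lt_or_eq with h | h
    · exact h
    · rw [← h] at hrpos; simp at hrpos
  set T := ∑ i ∈ Finset.univ.filter (fun i : Fin p => k ≤ (i : ℕ)), lam i ^ 2 with hTdef
  set H := ∑ i ∈ Finset.univ.filter (fun i : Fin p => ¬ k ≤ (i : ℕ)), lam i ^ 2 with hHdef
  have hsplit : T + H = S2 := Finset.sum_filter_add_sum_filter_not _ _ _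
  have hHnn : 0 ≤ H := Finset.sum_nonneg fun i _ => sq_nonneg _
  have hcard : (Finset.univ.filter (fun i : Fin p => ¬ k ≤ (i : ℕ))).card ≤ k := by
    have := Finset.card_le_card_of_injOn
      (s := Finset.univ.filter (fun i : Fin p => ¬ k ≤ (i : ℕ)))
      (f := fun i : Fin p => (i : ℕ)) (t := Finset.range k)
      (by intro i hi; simp at hi ⊢; omega)
      (by intro a _ b _ h; exact Fin.val_injective h)
    simpa using this
  have hCS : H ^ 2 ≤ (k : ℝ) * S4 := by
    have h1 : H ^ 2 ≤
        ((Finset.univ.filter (fun i : Fin p => ¬ k ≤ (i : ℕ))).card : ℝ) *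
          ∑ i ∈ Finset.univ.filter (fun i : Fin p => ¬ k ≤ (i : ℕ)), (lam i ^ 2) ^ 2 :=
      sq_sum_le_card_mul_sum_sq
    have h2 : ∑ i ∈ Finset.univ.filter (fun i : Fin p => ¬ k ≤ (i : ℕ)), (lam i ^ 2) ^ 2
        ≤ S4 := by
      rw [hS4def]
      calc ∑ i ∈ Finset.univ.filter (fun i : Fin p => ¬ k ≤ (i : ℕ)), (lam i ^ 2) ^ 2
          = ∑ i ∈ Finset.univ.filter (fun i : Fin p => ¬ k ≤ (i : ℕ)), lam i ^ 4 := by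
            apply Finset.sum_congr rfl; intro i _; ring
        _ ≤ ∑ i, lam i ^ 4 :=
            Finset.sum_le_sum_of_subset_of_nonneg (Finset.filter_subset _ _)
              (fun i _ _ => by positivity)
    calc H ^ 2 ≤ _ := h1
      _ ≤ (k : ℝ) * S4 := by
          apply mul_le_mul (by exact_mod_cast hcard) h2
            (Finset.sum_nonneg fun i _ => sq_nonneg _) (Nat.cast_nonneg k)
  have hsqrt_eq : Real.sqrt ((k : ℝ) / (S2 ^ 2 / S4)) * S2 = Real.sqrt ((k : ℝ) * S4) := by
    have h1 : (k : ℝ) / (S2 ^ 2 / S4) = ((k : ℝ) * S4) / S2 ^ 2 := by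
      field_simp
    rw [h1, Real.sqrt_div (by positivity), Real.sqrt_sq hS2pos.le,
      div_mul_cancel₀ _ hS2pos.ne']
  have hHle : H ≤ Real.sqrt ((k : ℝ) / (S2 ^ 2 / S4)) * S2 := by
    rw [hsqrt_eq]
    nlinarith [Real.sq_sqrt (show (0:ℝ) ≤ (k:ℝ)*S4 by positivity),
      Real.sqrt_nonneg ((k:ℝ)*S4), hCS, hHnn]
  have hslt : Real.sqrt ((k : ℝ) / (S2 ^ 2 / S4)) < 1 := by
    rw [show (1:ℝ) = Real.sqrt 1 by simp]
    apply Real.sqrt_lt_sqrt (by positivity)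
    rw [div_lt_one hrpos]
    exact hksrank
  have h1s : 0 < 1 - Real.sqrt ((k : ℝ) / (S2 ^ 2 / S4)) := by linarith
  rw [inv_mul_eq_div, le_div_iff₀ h1s]
  nlinarith [hHle, hsplit]
end

section
/- Let N ≤ p, let X ∈ ℝ^{N×p} be a matrix and s > 0 such that ‖Xᵀv‖₂ ≥ s‖v‖₂ for every v ∈ ℝ^N (i.e. the smallest singular value of X is at least s). Let α* ∈ ℝ^p, ξ ∈ ℝ^N, and Y = Xα* + ξ. Then a minimum-ℓ₂-norm interpolant α̂ of (X, Y) exists, and every such α̂ satisfies ‖α̂ − α*‖₂ ≤ ‖α*‖₂ + ‖ξ‖₂ / s. -/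
open Matrix Finset

private lemma aux_cs {n : ℕ} (a b : Fin n → ℝ) :
    ∑ i, a i * b i ≤ Real.sqrt (∑ i, a i ^ 2) * Real.sqrt (∑ i, b i ^ 2) := by
  have h := Finset.sum_mul_sq_le_sq_mul_sq Finset.univ a b
  calc ∑ i, a i * b i ≤ |∑ i, a i * b i| := le_abs_self _
    _ = Real.sqrt ((∑ i, a i * b i) ^ 2) := (Real.sqrt_sq_eq_abs _).symm
    _ ≤ Real.sqrt ((∑ i, a i ^ 2) * ∑ i, b i ^ 2) := Real.sqrt_le_sqrt h
    _ = _ := Real.sqrt_mul (by positivity) _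

private lemma aux_tri {n : ℕ} (a b : Fin n → ℝ) :
    Real.sqrt (∑ i, (a i + b i) ^ 2)
      ≤ Real.sqrt (∑ i, a i ^ 2) + Real.sqrt (∑ i, b i ^ 2) := by
  have hcs := aux_cs a b
  have hexp : ∑ i, (a i + b i) ^ 2
      = ∑ i, a i ^ 2 + 2 * (∑ i, a i * b i) + ∑ i, b i ^ 2 := by
    rw [Finset.mul_sum, ← Finset.sum_add_distrib, ← Finset.sum_add_distrib]
    exact Finset.sum_congr rfl fun i _ => by ring
  have h2 : ∑ i, (a i + b i) ^ 2
      ≤ (Real.sqrt (∑ i, a i ^ 2) + Real.sqrt (∑ i, b i ^ 2)) ^ 2 := by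
    have ha : Real.sqrt (∑ i, a i ^ 2) ^ 2 = ∑ i, a i ^ 2 := Real.sq_sqrt (by positivity)
    have hb : Real.sqrt (∑ i, b i ^ 2) ^ 2 = ∑ i, b i ^ 2 := Real.sq_sqrt (by positivity)
    nlinarith [hcs, hexp]
  calc Real.sqrt (∑ i, (a i + b i) ^ 2)
      ≤ Real.sqrt ((Real.sqrt (∑ i, a i ^ 2) + Real.sqrt (∑ i, b i ^ 2)) ^ 2) :=
        Real.sqrt_le_sqrt h2
    _ = _ := by rw [Real.sqrt_sq (by positivity)]

private lemma aux_pyth {n : ℕ} (a b : Fin n → ℝ) (h : ∑ i, a i * (b i - a i) = 0) :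
    ∑ i, b i ^ 2 = ∑ i, a i ^ 2 + ∑ i, (b i - a i) ^ 2 := by
  have : ∑ i, b i ^ 2 = ∑ i, a i ^ 2 + 2 * (∑ i, a i * (b i - a i)) + ∑ i, (b i - a i) ^ 2 := by
    rw [Finset.mul_sum, ← Finset.sum_add_distrib, ← Finset.sum_add_distrib]
    exact Finset.sum_congr rfl fun i _ => by ring
  rw [this, h]; ring

/-- if `N ≤ p` and the smallest singular value of
`X ∈ ℝ^{N×p}` is at least `s > 0` (i.e. `‖Xᵀv‖₂ ≥ s‖v‖₂` for all `v`), then a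
minimum-`ℓ₂`-norm interpolant of `Y = Xα* + ξ` exists and every such
interpolant `α̂` satisfies `‖α̂ − α*‖₂ ≤ ‖α*‖₂ + ‖ξ‖₂/s`. -/
theorem stmt11 (N p : ℕ) (hNp : N ≤ p) (X : Matrix (Fin N) (Fin p) ℝ)
    (s : ℝ) (hs : 0 < s)
    (hsmin : ∀ v : Fin N → ℝ,
      s * Real.sqrt (∑ i, v i ^ 2) ≤ Real.sqrt (∑ j, (Xᵀ.mulVec v) j ^ 2))
    (αstar : Fin p → ℝ) (ξ : Fin N → ℝ) (Y : Fin N → ℝ)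
    (hY : Y = X.mulVec αstar + ξ) :
    (∃ αhat : Fin p → ℝ, X.mulVec αhat = Y ∧
        ∀ β : Fin p → ℝ, X.mulVec β = Y →
          Real.sqrt (∑ j, αhat j ^ 2) ≤ Real.sqrt (∑ j, β j ^ 2)) ∧
      ∀ αhat : Fin p → ℝ,
        (X.mulVec αhat = Y ∧ ∀ β : Fin p → ℝ, X.mulVec β = Y →
            Real.sqrt (∑ j, αhat j ^ 2) ≤ Real.sqrt (∑ j, β j ^ 2)) →
        Real.sqrt (∑ j, (αhat j - αstar j) ^ 2)
          ≤ Real.sqrt (∑ j, αstar j ^ 2) + Real.sqrt (∑ i, ξ i ^ 2) / s := by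
  set G : Matrix (Fin N) (Fin N) ℝ := X * Xᵀ with hG
  -- vec = 0 from ‖vec‖ and hsmin
  have hvzero : ∀ w : Fin N → ℝ, Xᵀ.mulVec w = 0 → w = 0 := by
    intro w hw
    have h1 := hsmin w
    rw [hw] at h1
    simp only [Pi.zero_apply] at h1
    have h2 : Real.sqrt (∑ i, w i ^ 2) ≤ 0 := by
      have : Real.sqrt (∑ j : Fin p, (0 : ℝ) ^ 2) = 0 := by simp
      nlinarith [Real.sqrt_nonneg (∑ i, w i ^ 2)]
    have h3 : ∑ i, w i ^ 2 = 0 := by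
      have := Real.sqrt_nonneg (∑ i, w i ^ 2)
      have h4 : Real.sqrt (∑ i, w i ^ 2) = 0 := le_antisymm h2 this
      have h5 : (0:ℝ) ≤ ∑ i, w i ^ 2 := by positivity
      nlinarith [Real.sq_sqrt h5]
    funext i
    have := (Finset.sum_eq_zero_iff_of_nonneg (fun i _ => sq_nonneg (w i))).1 h3 i (Finset.mem_univ i)
    exact pow_eq_zero_iff (n := 2) (by norm_num) |>.1 this
  -- key dot product identity
  have hdot : ∀ (u : Fin N → ℝ) (c : Fin p → ℝ),
      ∑ j, Xᵀ.mulVec u j * c j = ∑ i, u i * X.mulVec c i := by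
    intro u c
    have : Xᵀ.mulVec u ⬝ᵥ c = u ⬝ᵥ X.mulVec c := by
      rw [Matrix.mulVec_transpose, ← Matrix.dotProduct_mulVec]
    simpa [dotProduct] using this
  -- G is invertible
  have hGunit : IsUnit G := by
    rw [← Matrix.mulVec_injective_iff_isUnit]
    have hker : ∀ w, G.mulVec w = 0 → w = 0 := by
      intro w hw
      apply hvzero
      have h0 : ∑ i, w i * G.mulVec w i = 0 := by rw [hw]; simp
      have h1 : ∑ j, Xᵀ.mulVec w j * Xᵀ.mulVec w j = 0 := by
        rw [hdot w (Xᵀ.mulVec w)]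
        have : X.mulVec (Xᵀ.mulVec w) = G.mulVec w := by
          rw [hG, ← Matrix.mulVec_mulVec]
        rw [this]; exact h0
      funext j
      have := (Finset.sum_eq_zero_iff_of_nonneg
        (fun j _ => mul_self_nonneg (Xᵀ.mulVec w j))).1 h1 j (Finset.mem_univ j)
      simpa using mul_self_eq_zero.mp this
    intro u v huv
    have : G.mulVec (u - v) = 0 := by
      rw [Matrix.mulVec_sub, huv, sub_self]
    have := hker _ this
    exact sub_eq_zero.mp this
  have hGinv : ∀ z : Fin N → ℝ, G.mulVec (G⁻¹.mulVec z) = z := by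
    intro z
    rw [Matrix.mulVec_mulVec, Matrix.mul_nonsing_inv _ ((Matrix.isUnit_iff_isUnit_det G).1 hGunit)]
    simp
  -- the minimum-norm interpolant
  set u : Fin N → ℝ := G⁻¹.mulVec Y with hu
  set αhat0 : Fin p → ℝ := Xᵀ.mulVec u with hahat
  have hXahat : X.mulVec αhat0 = Y := by
    rw [hahat, Matrix.mulVec_mulVec, ← hG, hu]
    exact hGinv Y
  -- orthogonality: for any interpolant β, αhat0 ⬝ (β - αhat0) = 0
  have horth : ∀ β : Fin p → ℝ, X.mulVec β = Y → ∑ j, αhat0 j * (β j - αhat0 j) = 0 := by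
    intro β hβ
    have : (fun j => β j - αhat0 j) = β - αhat0 := rfl
    calc ∑ j, αhat0 j * (β j - αhat0 j) = ∑ i, u i * X.mulVec (β - αhat0) i := by
          rw [hahat, hdot u (fun j => β j - αhat0 j)]
          rfl
      _ = 0 := by rw [Matrix.mulVec_sub, hβ, hXahat, sub_self]; simp
  have hmin : ∀ β : Fin p → ℝ, X.mulVec β = Y →
      Real.sqrt (∑ j, αhat0 j ^ 2) ≤ Real.sqrt (∑ j, β j ^ 2) := by
    intro β hβ
    apply Real.sqrt_le_sqrt
    have := aux_pyth αhat0 β (horth β hβ)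
    nlinarith [Finset.sum_nonneg (fun j (_ : j ∈ Finset.univ) => sq_nonneg (β j - αhat0 j))]
  refine ⟨⟨αhat0, hXahat, hmin⟩, ?_⟩
  -- any min-norm interpolant equals αhat0
  intro αhat ⟨hXa, hmina⟩
  have heq : αhat = αhat0 := by
    have h1 := aux_pyth αhat0 αhat (horth αhat hXa)
    have h2 : Real.sqrt (∑ j, αhat j ^ 2) ≤ Real.sqrt (∑ j, αhat0 j ^ 2) := hmina αhat0 hXahat
    have h3 : ∑ j, αhat j ^ 2 ≤ ∑ j, αhat0 j ^ 2 := by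
      have hb : (0:ℝ) ≤ ∑ j, αhat0 j ^ 2 := by positivity
      have ha : (0:ℝ) ≤ ∑ j, αhat j ^ 2 := by positivity
      nlinarith [Real.sq_sqrt ha, Real.sq_sqrt hb, Real.sqrt_nonneg (∑ j, αhat j ^ 2),
        Real.sqrt_nonneg (∑ j, αhat0 j ^ 2)]
    have h4 : ∑ j, (αhat j - αhat0 j) ^ 2 = 0 := by
      have hnn : (0:ℝ) ≤ ∑ j, (αhat j - αhat0 j) ^ 2 := by positivity
      linarith
    funext j
    have := (Finset.sum_eq_zero_iff_of_nonneg
      (fun j _ => sq_nonneg (αhat j - αhat0 j))).1 h4 j (Finset.mem_univ j)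
    have := pow_eq_zero_iff (n := 2) (by norm_num) |>.1 this
    linarith [sub_eq_zero.mp this]
  rw [heq]
  -- decompose αhat0 - αstar
  set u1 : Fin N → ℝ := G⁻¹.mulVec (X.mulVec αstar) with hu1
  set u2 : Fin N → ℝ := G⁻¹.mulVec ξ with hu2
  have huu : u = u1 + u2 := by rw [hu, hu1, hu2, hY, Matrix.mulVec_add]
  set a : Fin p → ℝ := Xᵀ.mulVec u1 with haa
  set w : Fin p → ℝ := Xᵀ.mulVec u2 with hww
  have haw : αhat0 = a + w := by rw [hahat, huu, Matrix.mulVec_add]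
  have hsplit : ∀ j, αhat0 j - αstar j = (a j - αstar j) + w j := by
    intro j
    have : αhat0 j = a j + w j := congrFun haw j
    rw [this]; ring
  -- bound ‖a - αstar‖ ≤ ‖αstar‖
  have hXa' : X.mulVec a = X.mulVec αstar := by
    rw [haa, Matrix.mulVec_mulVec, ← hG, hu1]
    exact hGinv _
  have horth1 : ∑ j, a j * (αstar j - a j) = 0 := by
    calc ∑ j, a j * (αstar j - a j) = ∑ i, u1 i * X.mulVec (αstar - a) i := by
          rw [haa, hdot u1 (fun j => αstar j - a j)]; rfl
      _ = 0 := by rw [Matrix.mulVec_sub, hXa', sub_self]; simp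
  have hbound1 : Real.sqrt (∑ j, (a j - αstar j) ^ 2) ≤ Real.sqrt (∑ j, αstar j ^ 2) := by
    apply Real.sqrt_le_sqrt
    have := aux_pyth a αstar horth1
    have hsw : ∀ j, (a j - αstar j) ^ 2 = (αstar j - a j) ^ 2 := fun j => by ring
    rw [Finset.sum_congr rfl (fun j _ => hsw j), this]
    nlinarith [Finset.sum_nonneg (fun j (_ : j ∈ Finset.univ) => sq_nonneg (a j))]
  -- bound ‖w‖ ≤ ‖ξ‖/s
  have hbound2 : Real.sqrt (∑ j, w j ^ 2) ≤ Real.sqrt (∑ i, ξ i ^ 2) / s := by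
    set t : ℝ := Real.sqrt (∑ j, w j ^ 2) with ht
    have ht0 : 0 ≤ t := Real.sqrt_nonneg _
    have htsq : t ^ 2 = ∑ j, w j ^ 2 := Real.sq_sqrt (by positivity)
    have hXw : X.mulVec w = ξ := by
      rw [hww, Matrix.mulVec_mulVec, ← hG, hu2]
      exact hGinv _
    have hkey : t ^ 2 = ∑ i, u2 i * ξ i := by
      rw [htsq]
      have : ∑ j, w j ^ 2 = ∑ j, w j * w j := Finset.sum_congr rfl (fun j _ => sq (w j))
      rw [this, hww, hdot u2 (Xᵀ.mulVec u2), ← hww, hXw]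
    have hcs := aux_cs u2 ξ
    have hsm := hsmin u2
    rw [← hww, ← ht] at hsm
    -- t^2 ≤ sqrt(∑ u2²) * ‖ξ‖ ≤ (t/s) * ‖ξ‖
    have hξ0 : (0:ℝ) ≤ Real.sqrt (∑ i, ξ i ^ 2) := Real.sqrt_nonneg _
    have h5 : s * t ^ 2 ≤ t * Real.sqrt (∑ i, ξ i ^ 2) := by
      nlinarith [Real.sqrt_nonneg (∑ i, u2 i ^ 2)]
    rcases eq_or_lt_of_le ht0 with h | h
    · rw [← h]; positivity
    · rw [le_div_iff₀ hs]
      nlinarith [h5, h]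
  -- combine
  calc Real.sqrt (∑ j, (αhat0 j - αstar j) ^ 2)
      = Real.sqrt (∑ j, ((a j - αstar j) + w j) ^ 2) := by
        congr 1; exact Finset.sum_congr rfl (fun j _ => by rw [hsplit j])
    _ ≤ Real.sqrt (∑ j, (a j - αstar j) ^ 2) + Real.sqrt (∑ j, w j ^ 2) :=
        aux_tri (fun j => a j - αstar j) w
    _ ≤ Real.sqrt (∑ j, αstar j ^ 2) + Real.sqrt (∑ i, ξ i ^ 2) / s :=
        add_le_add hbound1 hbound2
end

section
/- Let ε ∈ (0,1), let k = ⌈ln(1/ε)⌉, and let p be an integer with 2k ≤ p. Let Σ be the p×p diagonal matrix with eigenvalues λ_i(Σ) = e^{−i} + ε for i = 1,…,p. Then the effective rank satisfies R_k(Σ) ≥ p/16. -/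
open Matrix Finset

/-- for `ε ∈ (0,1)`, `k = ⌈ln(1/ε)⌉` and `p ≥ 2k`, the diagonal
matrix `Σ` with eigenvalues `λ_i = e^{−i} + ε` (`i = 1,…,p`, nonincreasing)
has effective rank `R_k(Σ) = (Σ_{i>k} λ_i)²/(Σ_{i>k} λ_i²) ≥ p/16`. -/
theorem stmt15 (ε : ℝ) (hε : ε ∈ Set.Ioo (0 : ℝ) 1)
    (k : ℕ) (hk : k = ⌈Real.log (1 / ε)⌉₊)
    (p : ℕ) (hp : 2 * k ≤ p)
    (A : Matrix (Fin p) (Fin p) ℝ)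
    (hA : A = Matrix.diagonal fun i : Fin p => Real.exp (-((i : ℝ) + 1)) + ε) :
    (p : ℝ) / 16
      ≤ (∑ i ∈ Finset.univ.filter (fun i : Fin p => k ≤ (i : ℕ)),
            (Real.exp (-((i : ℝ) + 1)) + ε)) ^ 2 /
          (∑ i ∈ Finset.univ.filter (fun i : Fin p => k ≤ (i : ℕ)),
            (Real.exp (-((i : ℝ) + 1)) + ε) ^ 2) := by
  obtain ⟨hε0, hε1⟩ := hε
  -- k ≥ 1
  have hlog : 0 < Real.log (1 / ε) := Real.log_pos (by rw [lt_div_iff₀ hε0]; linarith)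
  have hk1 : 1 ≤ k := by
    rw [hk, Nat.one_le_ceil_iff]; exact hlog
  have hkp : k < p := lt_of_lt_of_le (by omega) hp
  -- exp(-k) ≤ ε
  have hek : Real.exp (-(k : ℝ)) ≤ ε := by
    have h1 : Real.log (1 / ε) ≤ (k : ℝ) := hk ▸ Nat.le_ceil _
    have : Real.exp (-(k:ℝ)) ≤ Real.exp (-Real.log (1/ε)) :=
      Real.exp_le_exp.2 (by linarith)
    calc Real.exp (-(k:ℝ)) ≤ Real.exp (-Real.log (1/ε)) := this
      _ = ε := by
        rw [Real.exp_neg, Real.exp_log (by positivity), one_div, inv_inv]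
  set S := Finset.univ.filter (fun i : Fin p => k ≤ (i : ℕ)) with hS
  have hcard : S.card = p - k := by
    have : S = Finset.Ici (⟨k, hkp⟩ : Fin p) := by
      ext i; simp [hS, Fin.le_def]
    rw [this, Fin.card_Ici]
  -- term bounds
  have hbound : ∀ i ∈ S, ε ≤ Real.exp (-((i : ℝ) + 1)) + ε ∧
      Real.exp (-((i : ℝ) + 1)) + ε ≤ 2 * ε := by
    intro i hi
    have hki : k ≤ (i : ℕ) := by simpa [hS] using hi
    constructor
    · nlinarith [Real.exp_pos (-((i : ℝ) + 1))]
    · have : Real.exp (-((i : ℝ) + 1)) ≤ Real.exp (-(k : ℝ)) := by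
        apply Real.exp_le_exp.2
        have : (k : ℝ) ≤ (i : ℝ) := Nat.cast_le.2 hki
        linarith
      linarith
  set N := ∑ i ∈ S, (Real.exp (-((i : ℝ) + 1)) + ε) with hN
  set D := ∑ i ∈ S, (Real.exp (-((i : ℝ) + 1)) + ε) ^ 2 with hD
  have hNlb : (S.card : ℝ) * ε ≤ N := by
    rw [hN]
    calc (S.card : ℝ) * ε = ∑ _i ∈ S, ε := by rw [Finset.sum_const, nsmul_eq_mul]
      _ ≤ _ := Finset.sum_le_sum (fun i hi => (hbound i hi).1)
  have hDub : D ≤ (S.card : ℝ) * (4 * ε ^ 2) := by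
    rw [hD]
    calc (∑ i ∈ S, (Real.exp (-((i : ℝ) + 1)) + ε) ^ 2)
        ≤ ∑ _i ∈ S, 4 * ε ^ 2 := by
          apply Finset.sum_le_sum
          intro i hi
          obtain ⟨h1, h2⟩ := hbound i hi
          nlinarith
      _ = (S.card : ℝ) * (4 * ε ^ 2) := by rw [Finset.sum_const, nsmul_eq_mul]
  have hc : (S.card : ℝ) = (p : ℝ) - (k : ℝ) := by
    rw [hcard, Nat.cast_sub hkp.le]
  have hc2 : 2 * (k : ℝ) ≤ (p : ℝ) := by exact_mod_cast hp
  have hcpos : (0 : ℝ) < (S.card : ℝ) := by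
    rw [hc]
    have : (1 : ℝ) ≤ (k : ℝ) := Nat.one_le_cast.2 hk1
    linarith
  have hDpos : 0 < D := by
    rw [hD]
    apply Finset.sum_pos
    · intro i hi; positivity
    · rw [← Finset.card_pos]; exact_mod_cast Nat.cast_pos.mp hcpos
  rw [le_div_iff₀ hDpos]
  have hNsq : ((S.card : ℝ) * ε) * ((S.card : ℝ) * ε) ≤ N * N :=
    mul_self_le_mul_self (by positivity) hNlb
  nlinarith [mul_le_mul_of_nonneg_left hDub (by positivity : (0:ℝ) ≤ (p:ℝ)/16),
    mul_pos hcpos (mul_pos hε0 hε0), sq_nonneg ε,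
    mul_nonneg (mul_nonneg hcpos.le hcpos.le) (sq_nonneg ε)]
end
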